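/- No linear operator on a finite-dimensional complex Hilbert space ℂⁿ is Li-Yorke chaotic. -/

import Mathlib

/-!
For `z = x - y`, factor the minimal polynomial of `T` into linear factors `X - ν` and peel them
off one at a time. If `‖ν‖ < 1`, the orbit of `z` tends to `0` as soon as that of `(T - ν) z`
does, because `T^(m+1) z = ν T^m z + o(1)`. If `‖ν‖ ≥ 1`, either the remaining factors already
annihilate `z`, or they map `z` to an eigenvector `v = A z` for `ν` with `A` commuting with `T`,
and then `‖v‖ ≤ ‖ν‖^m ‖v‖ = ‖A (T^m z)‖ ≤ ‖A‖ ‖T^m z‖`. Hence the orbit of `z` either tends to `0`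
(so the `limsup` vanishes) or stays bounded away from `0` (so the `liminf` is positive).
-/

open Filter Topology

/-- A pair `{x, y}` is a Li-Yorke chaotic pair for the operator `T`. -/
def LiYorkePair {E : Type*} [NormedAddCommGroup E] [NormedSpace ℂ E]
    (T : E →L[ℂ] E) (x y : E) : Prop :=
  0 < Filter.limsup (fun m => ‖(T ^ m) x - (T ^ m) y‖) Filter.atTop ∧
    Filter.liminf (fun m => ‖(T ^ m) x - (T ^ m) y‖) Filter.atTop = 0

/-- `T` is Li-Yorke chaotic. -/
def LiYorkeChaotic {E : Type*} [NormedAddCommGroup E] [NormedSpace ℂ E]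
    (T : E →L[ℂ] E) : Prop :=
  ∃ Γ : Set E, ¬Γ.Countable ∧ ∀ x ∈ Γ, ∀ y ∈ Γ, x ≠ y → LiYorkePair T x y

open Polynomial

lemma Polynomial.commute_aeval_self {R A : Type*} [CommSemiring R] [Semiring A] [Algebra R A]
    (a : A) (p : R[X]) : Commute (aeval a p) a := by
  simpa only [aeval_X] using (Commute.all p X).map (aeval a)

lemma tendsto_zero_of_le_mul_add {u e : ℕ → ℝ} {r : ℝ} (hu : ∀ m, 0 ≤ u m) (hr₀ : 0 ≤ r)
    (hr : r < 1) (he : Tendsto e atTop (𝓝 0)) (hrec : ∀ m, u (m + 1) ≤ r * u m + e m) :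
    Tendsto u atTop (𝓝 0) := by
  rw [Metric.tendsto_atTop]
  intro ε hε
  obtain ⟨N, hN⟩ := eventually_atTop.1 <| he.eventually <| ge_mem_nhds <|
    show (0 : ℝ) < (1 - r) * (ε / 2) by nlinarith
  have hbound : ∀ k, u (N + k) ≤ r ^ k * u N + ε / 2 := by
    intro k
    induction k with
    | zero => simp only [add_zero, pow_zero, one_mul]; linarith
    | succ k ih =>
      calc u (N + (k + 1)) ≤ r * u (N + k) + e (N + k) := hrec (N + k)
        _ ≤ r * (r ^ k * u N + ε / 2) + (1 - r) * (ε / 2) := by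
          gcongr
          exact hN _ (Nat.le_add_right N k)
        _ = r ^ (k + 1) * u N + ε / 2 := by ring
  obtain ⟨K, hK⟩ := eventually_atTop.1 <|
    ((tendsto_pow_atTop_nhds_zero_of_lt_one hr₀ hr).mul_const (u N)).eventually <|
      gt_mem_nhds <| show 0 * u N < ε / 2 by linarith
  refine ⟨N + K, fun m hm => ?_⟩
  obtain ⟨k, rfl⟩ := Nat.exists_eq_add_of_le (le_of_add_le_left hm)
  rw [Real.dist_eq, sub_zero, abs_of_nonneg (hu _)]
  linarith [hbound k, hK k (by omega)]

section Seminormed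

variable {𝕜 E : Type*} [NontriviallyNormedField 𝕜] [SeminormedAddCommGroup E] [NormedSpace 𝕜 E]

lemma tendsto_zero_of_tendsto_sub_smul {a : ℕ → E} {ν : 𝕜} (hν : ‖ν‖ < 1)
    (h : Tendsto (fun m => a (m + 1) - ν • a m) atTop (𝓝 0)) : Tendsto a atTop (𝓝 0) := by
  rw [tendsto_zero_iff_norm_tendsto_zero] at h ⊢
  refine tendsto_zero_of_le_mul_add (fun _ => norm_nonneg _) (norm_nonneg ν) hν h fun m => ?_
  calc ‖a (m + 1)‖ = ‖ν • a m + (a (m + 1) - ν • a m)‖ := by rw [add_sub_cancel]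
    _ ≤ ‖ν‖ * ‖a m‖ + ‖a (m + 1) - ν • a m‖ := (norm_add_le _ _).trans_eq (by rw [norm_smul])

lemma pow_apply_eq_pow_smul {T : E →L[𝕜] E} {μ : 𝕜} {v : E} (hv : T v = μ • v) (m : ℕ) :
    (T ^ m) v = μ ^ m • v := by
  induction m with
  | zero => simp
  | succ m ih => rw [pow_succ', mul_apply_eq_comp, ih, map_smul, hv, smul_smul, pow_succ]

lemma norm_apply_le_opNorm_mul_norm_pow_apply {T A : E →L[𝕜] E} (hA : Commute A T) {μ : 𝕜}
    (hμ : 1 ≤ ‖μ‖) {z : E} (hz : T (A z) = μ • A z) (m : ℕ) :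
    ‖A z‖ ≤ ‖A‖ * ‖(T ^ m) z‖ :=
  calc ‖A z‖ ≤ ‖μ‖ ^ m * ‖A z‖ := le_mul_of_one_le_left (norm_nonneg _) (one_le_pow₀ hμ)
    _ = ‖(T ^ m) (A z)‖ := by rw [pow_apply_eq_pow_smul hz, norm_smul, norm_pow]
    _ = ‖A ((T ^ m) z)‖ := by rw [← mul_apply_eq_comp, ← (hA.pow_right m).eq]; rfl
    _ ≤ ‖A‖ * ‖(T ^ m) z‖ := A.le_opNorm _

theorem tendsto_pow_apply_or_exists_eigenvector_aeval (T : E →L[𝕜] E) (s : Multiset 𝕜) {z : E}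
    (hz : aeval T (s.map fun ν => X - C ν).prod z = 0) :
    Tendsto (fun m => (T ^ m) z) atTop (𝓝 0) ∨
      ∃ p : 𝕜[X], ∃ μ : 𝕜, 1 ≤ ‖μ‖ ∧ aeval T p z ≠ 0 ∧ T (aeval T p z) = μ • aeval T p z := by
  induction s using Multiset.induction_on generalizing z with
  | empty =>
    left
    simp_all [tendsto_const_nhds]
  | cons μ s ih =>
    set q := (s.map fun ν => X - C ν).prod
    rw [Multiset.map_cons, Multiset.prod_cons] at hz
    have hsub : aeval T (X - C μ) = T - algebraMap 𝕜 _ μ := by simp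
    by_cases hμ : ‖μ‖ < 1
    · rw [mul_comm, map_mul, mul_apply_eq_comp] at hz
      rcases ih hz with htends | ⟨p, ν, hν, hne, heig⟩
      · left
        refine tendsto_zero_of_tendsto_sub_smul hμ (htends.congr fun m => ?_)
        rw [hsub, pow_succ, mul_apply_eq_comp, sub_apply, map_sub,
          ContinuousLinearMap.algebraMap_apply, map_smul]
      · right
        refine ⟨p * (X - C μ), ν, hν, ?_⟩
        simpa only [map_mul, mul_apply_eq_comp] using And.intro hne heig
    · by_cases hq : aeval T q z = 0
      · exact ih hq
      · right
        refine ⟨q, μ, not_lt.1 hμ, hq, ?_⟩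
        rw [map_mul, mul_apply_eq_comp, hsub] at hz
        simpa [sub_eq_zero] using hz

end Seminormed

section Normed

variable {𝕜 E : Type*} [NontriviallyNormedField 𝕜] [NormedAddCommGroup E] [NormedSpace 𝕜 E]

theorem tendsto_pow_apply_or_exists_forall_le_norm_pow_apply [IsAlgClosed 𝕜]
    [FiniteDimensional 𝕜 E] (T : E →L[𝕜] E) (z : E) :
    Tendsto (fun m => (T ^ m) z) atTop (𝓝 0) ∨ ∃ c > 0, ∀ m, c ≤ ‖(T ^ m) z‖ := by
  have hmin : aeval T ((minpoly 𝕜 T).roots.map fun ν => X - C ν).prod z = 0 := by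
    rw [← (IsAlgClosed.splits _).eq_prod_roots_of_monic (minpoly.monic
      (Algebra.IsIntegral.isIntegral T)), minpoly.aeval, zero_apply]
  refine (tendsto_pow_apply_or_exists_eigenvector_aeval T _ hmin).imp_right ?_
  rintro ⟨p, μ, hμ, hne, heig⟩
  have hA : 0 < ‖aeval T p‖ := norm_pos_iff.2 fun h => hne (by rw [h, zero_apply])
  refine ⟨‖aeval T p z‖ / ‖aeval T p‖, div_pos (norm_pos_iff.2 hne) hA, fun m => ?_⟩
  rw [div_le_iff₀' hA]
  exact norm_apply_le_opNorm_mul_norm_pow_apply (commute_aeval_self T p) hμ heig m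

end Normed

namespace LiYorkePair

variable {E : Type*} [NormedAddCommGroup E] [NormedSpace ℂ E] {T : E →L[ℂ] E} {x y : E}

lemma not_tendsto_pow_apply_sub (h : LiYorkePair T x y) :
    ¬Tendsto (fun m => (T ^ m) (x - y)) atTop (𝓝 0) := by
  intro ht
  have hlim := (tendsto_zero_iff_norm_tendsto_zero.1 ht).limsup_eq
  simp only [map_sub] at hlim
  exact h.1.ne' hlim

lemma exists_norm_pow_apply_sub_lt (h : LiYorkePair T x y) {c : ℝ} (hc : 0 < c) :
    ∃ m, ‖(T ^ m) (x - y)‖ < c := by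
  obtain ⟨hsup, hinf⟩ := h
  -- `limsup` of a sequence unbounded above is the junk value `0`, which `hsup` excludes.
  have hbdd : IsBoundedUnder (· ≤ ·) atTop fun m => ‖(T ^ m) x - (T ^ m) y‖ := by
    by_contra hb
    exact hsup.ne' (Real.limsup_of_not_isBoundedUnder hb)
  obtain ⟨m, hm⟩ := (frequently_lt_of_liminf_lt hbdd.isCoboundedUnder_ge (hinf ▸ hc)).exists
  exact ⟨m, by rwa [map_sub]⟩

end LiYorkePair

theorem finite_dim_not_liYorkeChaotic_general (n : ℕ)
    (T : EuclideanSpace ℂ (Fin n) →L[ℂ] EuclideanSpace ℂ (Fin n)) :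
    ¬ LiYorkeChaotic T := by
  rintro ⟨Γ, hΓ, hpairs⟩
  obtain ⟨x, hx, y, hy, hxy⟩ := Set.not_subsingleton_iff.1 fun h => hΓ h.countable
  have hpair := hpairs x hx y hy hxy
  rcases tendsto_pow_apply_or_exists_forall_le_norm_pow_apply T (x - y) with htends | ⟨c, hc, hle⟩
  · exact hpair.not_tendsto_pow_apply_sub htends
  · obtain ⟨m, hm⟩ := hpair.exists_norm_pow_apply_sub_lt hc
    exact (hle m).not_gt hm

theorem finite_dim_not_liYorkeChaotic (n : ℕ) (hn : 0 < n)
    (T : EuclideanSpace ℂ (Fin n) →L[ℂ] EuclideanSpace ℂ (Fin n)) :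
    ¬ LiYorkeChaotic T :=
  finite_dim_not_liYorkeChaotic_general n T
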